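/- Let R be a countable discrete PID with a proper norm, and let 𝔭, 𝔮 be nonzero prime ideals of R. If there is a continuous injective R-linear map ℓ¹(R/𝔭) → ℓ¹(R/𝔮), then 𝔭 = 𝔮. More precisely, for any nonzero x ∈ ℓ¹(R/𝔭), the annihilator of x in R is 𝔭, and an injective R-linear map preserves annihilators. -/
import Mathlib


/-- Membership in `ℓ¹(S)` for a normed coefficient ring `S`. -/
def MemL1 {S : Type*} (ν : S → ℝ) (x : ℕ → S) : Prop :=
  Summable fun k => ν (x k) / (Nat.factorial k : ℝ)

/-- The `ℓ¹` norm `Σ_k ν (x k) / k!`. -/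
noncomputable def l1Norm {S : Type*} (ν : S → ℝ) (x : ℕ → S) : ℝ :=
  ∑' k, ν (x k) / (Nat.factorial k : ℝ)

/-- The quotient norm on `R ⧸ I` : `|r + I| = inf_{s ∈ r + I} |s|`. -/
noncomputable def quotNorm {R : Type*} [CommRing R] (ν : R → ℝ) (I : Ideal R)
    (a : R ⧸ I) : ℝ :=
  sInf (ν '' {r : R | Ideal.Quotient.mk I r = a})

lemma quotNorm_zero' {R : Type*} [CommRing R] (ν : R → ℝ)
    (hnonneg : ∀ a, 0 ≤ ν a) (hz : ν 0 = 0) (I : Ideal R) :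
    quotNorm ν I 0 = 0 := by
  unfold quotNorm
  apply le_antisymm
  · exact csInf_le ⟨0, by rintro y ⟨r, -, rfl⟩; exact hnonneg r⟩
      ⟨0, by simp, hz⟩
  · apply le_csInf ⟨ν 0, Set.mem_image_of_mem ν (by simp)⟩
    rintro y ⟨r, -, rfl⟩; exact hnonneg r

lemma ann_eq' {R : Type*} [CommRing R] (𝔭 : Ideal R) (hp : 𝔭.IsPrime)
    (x : ℕ → R ⧸ 𝔭) (hx : x ≠ 0) : {r : R | r • x = 0} = (𝔭 : Set R) := by
  ext r
  simp only [Set.mem_setOf_eq, SetLike.mem_coe]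
  constructor
  · intro h
    obtain ⟨k, hk⟩ : ∃ k, x k ≠ 0 := by
      by_contra hc; push_neg at hc; exact hx (funext hc)
    have h1 : r • x k = 0 := congrFun h k
    obtain ⟨a, ha⟩ := Ideal.Quotient.mk_surjective (x k)
    rw [← ha] at h1
    have h2 : (Ideal.Quotient.mk 𝔭 r) * Ideal.Quotient.mk 𝔭 a = 0 := h1
    rw [← ha] at hk
    rw [← Ideal.Quotient.eq_zero_iff_mem]
    rcases mul_eq_zero.mp h2 with h3 | h3
    · exact h3
    · exact absurd h3 hk
  · intro h
    funext k
    obtain ⟨a, ha⟩ := Ideal.Quotient.mk_surjective (x k)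
    show r • x k = (0 : ℕ → R ⧸ 𝔭) k
    rw [← ha]
    show (Ideal.Quotient.mk 𝔭) (r * a) = (0 : ℕ → R ⧸ 𝔭) k
    rw [Pi.zero_apply, Ideal.Quotient.eq_zero_iff_mem]
    exact Ideal.mul_mem_right a 𝔭 h

theorem stmt_18 (R : Type*) [CommRing R] [IsDomain R] [IsPrincipalIdealRing R]
    [Countable R] (ν : R → ℝ)
    -- ν is a proper norm on R (finite closed balls):
    (hnonneg : ∀ a, 0 ≤ ν a)
    (hzero : ∀ a, ν a = 0 ↔ a = 0)
    (hneg : ∀ a, ν (-a) = ν a)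
    (hadd : ∀ a b, ν (a + b) ≤ ν a + ν b)
    (hmul : ∀ a b, ν (a * b) ≤ ν a * ν b)
    (hproper : ∀ (a : R) (ε : ℝ), {b : R | ν (b - a) ≤ ε}.Finite)
    -- 𝔭 and 𝔮 are nonzero prime ideals:
    (𝔭 𝔮 : Ideal R) (hp : 𝔭.IsPrime) (hq : 𝔮.IsPrime) (hp0 : 𝔭 ≠ ⊥) (hq0 : 𝔮 ≠ ⊥) :
    -- the annihilator of any nonzero element of ℓ¹(R/𝔭) is 𝔭:
    (∀ x : ℕ → R ⧸ 𝔭, MemL1 (quotNorm ν 𝔭) x → x ≠ 0 →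
      {r : R | r • x = 0} = (𝔭 : Set R)) ∧
    -- a continuous injective R-linear map ℓ¹(R/𝔭) → ℓ¹(R/𝔮) forces 𝔭 = 𝔮:
    ((∃ f : {x : ℕ → R ⧸ 𝔭 // MemL1 (quotNorm ν 𝔭) x} →
          {y : ℕ → R ⧸ 𝔮 // MemL1 (quotNorm ν 𝔮) y},
        (∀ (x y : {x : ℕ → R ⧸ 𝔭 // MemL1 (quotNorm ν 𝔭) x})
            (h : MemL1 (quotNorm ν 𝔭) (x.1 + y.1)),
          (f ⟨x.1 + y.1, h⟩).1 = (f x).1 + (f y).1) ∧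
        (∀ (r : R) (x : {x : ℕ → R ⧸ 𝔭 // MemL1 (quotNorm ν 𝔭) x})
            (h : MemL1 (quotNorm ν 𝔭) (r • x.1)),
          (f ⟨r • x.1, h⟩).1 = r • (f x).1) ∧
        Function.Injective f ∧
        (∀ (x : {x : ℕ → R ⧸ 𝔭 // MemL1 (quotNorm ν 𝔭) x}) (ε : ℝ), ε > 0 →
          ∃ δ > 0, ∀ y : {x : ℕ → R ⧸ 𝔭 // MemL1 (quotNorm ν 𝔭) x},
            l1Norm (quotNorm ν 𝔭) (y.1 - x.1) < δ →
              l1Norm (quotNorm ν 𝔮) ((f y).1 - (f x).1) < ε)) →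
      𝔭 = 𝔮) := by
  have hz : ν 0 = 0 := (hzero 0).mpr rfl
  refine ⟨fun x _ hx => ann_eq' 𝔭 hp x hx, ?_⟩
  rintro ⟨f, -, hsmul, hinj, -⟩
  haveI : 𝔭.IsPrime := hp
  -- the indicator element
  set x₀ : ℕ → R ⧸ 𝔭 := fun k => if k = 0 then 1 else 0 with hx₀def
  have hmem : MemL1 (quotNorm ν 𝔭) x₀ := by
    apply summable_of_ne_finset_zero (s := {0})
    intro k hk
    simp only [Finset.mem_singleton] at hk
    simp [hx₀def, hk, quotNorm_zero' ν hnonneg hz]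
  have hzmem : MemL1 (quotNorm ν 𝔭) (0 : ℕ → R ⧸ 𝔭) := by
    have : (fun k => quotNorm ν 𝔭 ((0 : ℕ → R ⧸ 𝔭) k) / (Nat.factorial k : ℝ))
        = fun _ => 0 := by
      funext k; simp [quotNorm_zero' ν hnonneg hz]
    unfold MemL1
    rw [this]
    exact summable_zero
  have hx0ne : x₀ ≠ 0 := by
    intro h
    have : (1 : R ⧸ 𝔭) = 0 := by
      have := congrFun h 0
      simpa [hx₀def] using this
    exact one_ne_zero this
  -- f sends 0 to 0
  have hf0 : (f ⟨0, hzmem⟩).1 = 0 := by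
    have hm : MemL1 (quotNorm ν 𝔭) ((0 : R) • x₀) := by
      rw [zero_smul]; exact hzmem
    have h1 := hsmul 0 ⟨x₀, hmem⟩ hm
    have h2 : (⟨(0 : R) • x₀, hm⟩ : {x : ℕ → R ⧸ 𝔭 // MemL1 (quotNorm ν 𝔭) x})
        = ⟨0, hzmem⟩ := Subtype.ext (zero_smul R x₀)
    rw [h2] at h1
    rw [h1, zero_smul]
  -- f x₀ is nonzero
  have hyne : (f ⟨x₀, hmem⟩).1 ≠ 0 := by
    intro h
    apply hx0ne
    have : (⟨x₀, hmem⟩ : {x : ℕ → R ⧸ 𝔭 // MemL1 (quotNorm ν 𝔭) x}) = ⟨0, hzmem⟩ :=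
      hinj (Subtype.ext (h.trans hf0.symm))
    exact congrArg Subtype.val this
  -- 𝔭 ≤ 𝔮
  have hle : 𝔭 ≤ 𝔮 := by
    intro r hr
    have hrx : r • x₀ = 0 := by
      have h' : r ∈ {s : R | s • x₀ = 0} := by
        rw [ann_eq' 𝔭 hp x₀ hx0ne]; exact hr
      exact h'
    have hm : MemL1 (quotNorm ν 𝔭) (r • x₀) := by rw [hrx]; exact hzmem
    have h1 := hsmul r ⟨x₀, hmem⟩ hm
    have h2 : (⟨r • x₀, hm⟩ : {x : ℕ → R ⧸ 𝔭 // MemL1 (quotNorm ν 𝔭) x})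
        = ⟨0, hzmem⟩ := Subtype.ext hrx
    rw [h2, hf0] at h1
    have h3 : r ∈ {s : R | s • (f ⟨x₀, hmem⟩).1 = 0} := h1.symm
    rwa [ann_eq' 𝔮 hq (f ⟨x₀, hmem⟩).1 hyne] at h3
  exact (hp.isMaximal hp0).eq_of_le hq.ne_top hle
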